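/- Let V be a real normed space satisfying the Aronszajn criterion. If p and q are nonzero vectors with ‖p + q‖ = ‖p - q‖, then for all rational numbers a and b, ‖a • p + b • q‖ = ‖a • p - b • q‖. -/

import Mathlib

/-!
Call `x` and `y` isosceles orthogonal when `‖x + y‖ = ‖x - y‖`. The Aronszajn criterion, applied
to `x + (t + 1) • y, y` and `x - (t + 1) • y, -y`, propagates this relation from `t • y` and
`(t + 1) • y` to `(t + 2) • y`; starting from `0` and `y` this gives all integer multiples of `y`.
Rational multiples follow by clearing denominators, since the relation is homogeneous.
-/

def IsoOrthogonal {V : Type*} [SeminormedAddCommGroup V] (x y : V) : Prop :=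
  ‖x + y‖ = ‖x - y‖

def AronszajnCriterion (V : Type*) [SeminormedAddCommGroup V] : Prop :=
  ∀ v₁ w₁ v₂ w₂ : V, ‖v₁‖ = ‖v₂‖ → ‖w₁‖ = ‖w₂‖ → ‖v₁ - w₁‖ = ‖v₂ - w₂‖ → ‖v₁ + w₁‖ = ‖v₂ + w₂‖

namespace IsoOrthogonal

section SeminormedAddCommGroup

variable {V : Type*} [SeminormedAddCommGroup V] {x y : V}

theorem symm (h : IsoOrthogonal x y) : IsoOrthogonal y x := by
  rw [IsoOrthogonal, add_comm, norm_sub_rev]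
  exact h

theorem neg_right (h : IsoOrthogonal x y) : IsoOrthogonal x (-y) := by
  rw [IsoOrthogonal, sub_neg_eq_add, ← sub_eq_add_neg]
  exact Eq.symm h

theorem zero_right (x : V) : IsoOrthogonal x 0 := by
  simp [IsoOrthogonal]

end SeminormedAddCommGroup

variable {V : Type*} [SeminormedAddCommGroup V] [NormedSpace ℝ V] {x y : V}

theorem smul_smul_iff {c : ℝ} (hc : c ≠ 0) :
    IsoOrthogonal (c • x) (c • y) ↔ IsoOrthogonal x y := by
  simp only [IsoOrthogonal, ← smul_add, ← smul_sub, norm_smul]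
  exact mul_right_inj' (norm_ne_zero_iff.mpr hc)

theorem add_two_smul (hA : AronszajnCriterion V) {t : ℝ} (h₀ : IsoOrthogonal x (t • y))
    (h₁ : IsoOrthogonal x ((t + 1) • y)) : IsoOrthogonal x ((t + 2) • y) := by
  unfold IsoOrthogonal at *
  have hdiff : ‖x + (t + 1) • y - y‖ = ‖x - (t + 1) • y - -y‖ := by
    convert h₀ using 2 <;> module
  have := hA _ y _ (-y) h₁ (norm_neg y).symm hdiff
  convert this using 2 <;> module

theorem natCast_smul (hA : AronszajnCriterion V) (h : IsoOrthogonal x y) (n : ℕ) :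
    IsoOrthogonal x ((n : ℝ) • y) := by
  induction n using Nat.twoStepInduction with
  | zero => simpa using zero_right x
  | one => simpa using h
  | more n h₀ h₁ =>
    push_cast at h₁ ⊢
    simpa only [add_assoc, one_add_one_eq_two] using add_two_smul hA h₀ h₁

theorem intCast_smul (hA : AronszajnCriterion V) (h : IsoOrthogonal x y) (n : ℤ) :
    IsoOrthogonal x ((n : ℝ) • y) := by
  obtain ⟨n, rfl | rfl⟩ := n.eq_nat_or_neg
  · exact_mod_cast natCast_smul hA h n
  · simpa [neg_smul] using (natCast_smul hA h n).neg_right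

theorem ratCast_smul (hA : AronszajnCriterion V) (h : IsoOrthogonal x y) (q : ℚ) :
    IsoOrthogonal x ((q : ℝ) • y) := by
  have hden : (q.den : ℝ) ≠ 0 := by positivity
  -- scale by `q.den`, turning `q • y` into `q.num • y`
  rw [← smul_smul_iff hden, smul_smul, mul_comm, ← Rat.cast_natCast, ← Rat.cast_mul,
    Rat.mul_den_eq_num, Rat.cast_intCast]
  exact (intCast_smul hA (intCast_smul hA h q.num).symm q.den).symm

theorem ratCast_smul_ratCast_smul (hA : AronszajnCriterion V) (h : IsoOrthogonal x y) (a b : ℚ) :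
    IsoOrthogonal ((a : ℝ) • x) ((b : ℝ) • y) :=
  (ratCast_smul hA (ratCast_smul hA h b).symm a).symm

end IsoOrthogonal

theorem stmt_3_general (V : Type*) [NormedAddCommGroup V] [NormedSpace ℝ V]
    (hA : ∀ v₁ w₁ v₂ w₂ : V, ‖v₁‖ = ‖v₂‖ → ‖w₁‖ = ‖w₂‖ → ‖v₁ - w₁‖ = ‖v₂ - w₂‖ → ‖v₁ + w₁‖ = ‖v₂ + w₂‖)
    (p q : V) (hpq : ‖p + q‖ = ‖p - q‖) :
    ∀ a b : ℚ, ‖(a : ℝ) • p + (b : ℝ) • q‖ = ‖(a : ℝ) • p - (b : ℝ) • q‖ :=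
  IsoOrthogonal.ratCast_smul_ratCast_smul hA hpq

theorem stmt_3 (V : Type*) [NormedAddCommGroup V] [NormedSpace ℝ V]
    (hA : ∀ v₁ w₁ v₂ w₂ : V, ‖v₁‖ = ‖v₂‖ → ‖w₁‖ = ‖w₂‖ → ‖v₁ - w₁‖ = ‖v₂ - w₂‖ → ‖v₁ + w₁‖ = ‖v₂ + w₂‖)
    (p q : V) (hp : p ≠ 0) (hq : q ≠ 0) (hpq : ‖p + q‖ = ‖p - q‖) :
    ∀ a b : ℚ, ‖(a : ℝ) • p + (b : ℝ) • q‖ = ‖(a : ℝ) • p - (b : ℝ) • q‖ :=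
  stmt_3_general V hA p q hpq
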